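/- Let Φ = {φ_k}_{k=1}^M be a frame for ℝ^N, N ≥ 2. If there exists an orthogonal transformation T of ℝ^N such that T(φ_k) ∈ ℝ^{N−2} × (0,∞)² for every k (i.e., the last two coordinates of each T(φ_k) are strictly positive), then Φ is not scalable. In particular, Φ is not scalable if there exist indices i ≠ j in {1,...,N} such that φ_k(i)·φ_k(j) > 0 for all k ∈ {1,...,M}. -/

import Mathlib

open scoped BigOperators

namespace ScalableFrames

/-- The Euclidean dot product on `Fin n → ℝ`. -/
def dot {n : ℕ} (x y : Fin n → ℝ) : ℝ := ∑ i, x i * y i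

/-- `Φ = {φ_k}_{k=1}^M` is a frame for `ℝ^N`:
there are `0 < A, B` with `A‖x‖² ≤ ∑_k ⟨x, φ_k⟩² ≤ B‖x‖²` for all `x`. -/
def IsFrame {M N : ℕ} (Φ : Fin M → Fin N → ℝ) : Prop :=
  ∃ A B : ℝ, 0 < A ∧ 0 < B ∧ ∀ x : Fin N → ℝ,
    A * dot x x ≤ ∑ k, dot x (Φ k) ^ 2 ∧ ∑ k, dot x (Φ k) ^ 2 ≤ B * dot x x

/-- `Φ` is a tight frame for `ℝ^N` (the frame inequality holds with `A = B > 0`). -/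
def IsTight {M N : ℕ} (Φ : Fin M → Fin N → ℝ) : Prop :=
  ∃ A : ℝ, 0 < A ∧ ∀ x : Fin N → ℝ, ∑ k, dot x (Φ k) ^ 2 = A * dot x x

/-- The subfamily `{φ_i}_{i ∈ I}` is a tight frame for `ℝ^N`. -/
def IsTightOn {M N : ℕ} (Φ : Fin M → Fin N → ℝ) (I : Finset (Fin M)) : Prop :=
  ∃ A : ℝ, 0 < A ∧ ∀ x : Fin N → ℝ, ∑ k ∈ I, dot x (Φ k) ^ 2 = A * dot x x

/-- `Φ` is scalable: nonnegative scalars `c_k` make `{c_k φ_k}` a tight frame. -/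
def IsScalable {M N : ℕ} (Φ : Fin M → Fin N → ℝ) : Prop :=
  ∃ c : Fin M → ℝ, (∀ k, 0 ≤ c k) ∧ IsTight fun k => c k • Φ k

/-- `Φ` is strictly scalable: strictly positive scalars `c_k` make `{c_k φ_k}` a tight frame. -/
def IsStrictlyScalable {M N : ℕ} (Φ : Fin M → Fin N → ℝ) : Prop :=
  ∃ c : Fin M → ℝ, (∀ k, 0 < c k) ∧ IsTight fun k => c k • Φ k

/-- `Φ` is `m`-scalable: some subset `I` of size `m` admits nonnegative scalars `(c_i)_{i∈I}`
making `{c_i φ_i}_{i∈I}` a tight frame for `ℝ^N`. -/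
def IsMScalable {M N : ℕ} (Φ : Fin M → Fin N → ℝ) (m : ℕ) : Prop :=
  ∃ I : Finset (Fin M), I.card = m ∧
    ∃ c : Fin M → ℝ, (∀ i ∈ I, 0 ≤ c i) ∧ IsTightOn (fun k => c k • Φ k) I

/-- `Φ` is strictly `m`-scalable: some subset `I` of size `m` admits strictly positive scalars
`(c_i)_{i∈I}` making `{c_i φ_i}_{i∈I}` a tight frame for `ℝ^N`. -/
def IsStrictlyMScalable {M N : ℕ} (Φ : Fin M → Fin N → ℝ) (m : ℕ) : Prop :=
  ∃ I : Finset (Fin M), I.card = m ∧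
    ∃ c : Fin M → ℝ, (∀ i ∈ I, 0 < c i) ∧ IsTightOn (fun k => c k • Φ k) I

/-- The rank-one outer product `φφᵀ` as an `N×N` matrix. -/
def outer {N : ℕ} (φ : Fin N → ℝ) : Matrix (Fin N) (Fin N) ℝ := Matrix.vecMulVec φ φ

/-- `d = (N-1)(N+2)/2`. -/
def Fdim (N : ℕ) : ℕ := (N - 1) * (N + 2) / 2

/-- The map `F : ℝ^N → ℝ^d` obtained by stacking the blocks
`F_0(x) = (x_1²-x_2², …, x_1²-x_N²)` and `F_k(x) = (x_k x_{k+1}, …, x_k x_N)`, `k = 1,…,N-1`;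
in `1`-based indexing the entry `x_k x_ℓ` sits at position `k(2N-1-k)/2 + ℓ - 1`. -/
def Fmap {N : ℕ} (x : Fin N → ℝ) : Fin (Fdim N) → ℝ := fun j =>
  (if h : j.val + 1 < N then x ⟨0, by omega⟩ ^ 2 - x ⟨j.val + 1, h⟩ ^ 2 else 0) +
  ∑ a : Fin N, ∑ b : Fin N,
    if a.val < b.val ∧ j.val + 1 = (a.val + 1) * (2 * N - 2 - a.val) / 2 + b.val
    then x a * x b else 0

open Classical in
/-- `‖u‖₀`, the number of nonzero entries of `u`. -/
noncomputable def zeroNorm {n : ℕ} (u : Fin n → ℝ) : ℕ :=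
  (Finset.univ.filter fun i => u i ≠ 0).card

/-!
A tight frame `{ψ_k}` has frame operator `∑ ψ_k ψ_kᵀ = A · Id`, so its off-diagonal entries
`∑_k ψ_k(i) ψ_k(j)` vanish while its diagonal entries are positive. For `ψ_k = c_k φ_k` the
entry `(i, j)` is `∑_k c_k² φ_k(i) φ_k(j)`, a sum of nonnegative terms when every
`φ_k(i) φ_k(j) > 0`; it can only vanish if all `c_k = 0`, which kills the diagonal.
The first claim reduces to the second because an orthogonal `T` preserves tightness of
`{c_k φ_k}`, so `{c_k T φ_k}` is tight with positive products in the last two coordinates.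
-/

open Matrix

variable {M N : ℕ}

lemma dot_eq_dotProduct (x y : Fin N → ℝ) : dot x y = x ⬝ᵥ y := rfl

namespace IsTight

variable {ψ : Fin M → Fin N → ℝ}

lemma sum_sq_pos (h : IsTight ψ) (i : Fin N) : 0 < ∑ k, ψ k i ^ 2 := by
  obtain ⟨A, hA, hψ⟩ := h
  have hi := hψ (Pi.single i 1)
  simp only [dot_eq_dotProduct, single_dotProduct, dotProduct_single, one_mul, mul_one,
    Pi.single_eq_same] at hi
  exact hi ▸ hA

lemma sum_mul_eq_zero (h : IsTight ψ) {i j : Fin N} (hij : i ≠ j) :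
    ∑ k, ψ k i * ψ k j = 0 := by
  obtain ⟨A, -, hψ⟩ := h
  have hsum := hψ (Pi.single i 1 + Pi.single j 1)
  have hdiff := hψ (Pi.single i 1 - Pi.single j 1)
  simp only [dot_eq_dotProduct, add_dotProduct, sub_dotProduct, single_dotProduct,
    Pi.add_apply, Pi.sub_apply, Pi.single_eq_same, Pi.single_eq_of_ne hij,
    Pi.single_eq_of_ne hij.symm, one_mul] at hsum hdiff
  have polarization : ∑ k, (ψ k i + ψ k j) ^ 2 - ∑ k, (ψ k i - ψ k j) ^ 2
      = 4 * ∑ k, ψ k i * ψ k j := by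
    rw [← Finset.sum_sub_distrib, Finset.mul_sum]
    exact Finset.sum_congr rfl fun k _ => by ring
  linarith

lemma orthogonal_mulVec (h : IsTight ψ) {T : Matrix (Fin N) (Fin N) ℝ} (hT : Tᵀ * T = 1) :
    IsTight fun k => T *ᵥ ψ k := by
  obtain ⟨A, hA, hψ⟩ := h
  refine ⟨A, hA, fun x => ?_⟩
  have hTTt : T * Tᵀ = 1 := mul_eq_one_comm.mp hT
  have hnorm : x ᵥ* T ⬝ᵥ x ᵥ* T = x ⬝ᵥ x := by
    rw [← dotProduct_mulVec, ← mulVec_transpose, mulVec_mulVec, hTTt, one_mulVec]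
  simpa only [dot_eq_dotProduct, dotProduct_mulVec, hnorm] using hψ (x ᵥ* T)

end IsTight

lemma IsScalable.orthogonal_mulVec {Φ : Fin M → Fin N → ℝ} (h : IsScalable Φ)
    {T : Matrix (Fin N) (Fin N) ℝ} (hT : Tᵀ * T = 1) : IsScalable fun k => T *ᵥ Φ k := by
  obtain ⟨c, hc, hcΦ⟩ := h
  refine ⟨c, hc, ?_⟩
  simpa only [mulVec_smul] using hcΦ.orthogonal_mulVec hT

lemma not_isScalable_of_mul_pos {Φ : Fin M → Fin N → ℝ} {i j : Fin N} (hij : i ≠ j)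
    (hpos : ∀ k, 0 < Φ k i * Φ k j) : ¬ IsScalable Φ := by
  rintro ⟨c, -, hcΦ⟩
  have hoff : ∑ k, c k ^ 2 * (Φ k i * Φ k j) = 0 := by
    rw [← hcΦ.sum_mul_eq_zero hij]
    exact Finset.sum_congr rfl fun k _ => by simp only [Pi.smul_apply, smul_eq_mul]; ring
  have hc : ∀ k, c k = 0 := fun k => by
    have hk := (Finset.sum_eq_zero_iff_of_nonneg fun k _ =>
      mul_nonneg (sq_nonneg (c k)) (hpos k).le).mp hoff k (Finset.mem_univ k)
    exact pow_eq_zero_iff two_ne_zero |>.mp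
      ((mul_eq_zero.mp hk).resolve_right (hpos k).ne')
  simpa [hc] using hcΦ.sum_sq_pos i

/-- Let `Φ = {φ_k}_{k=1}^M` be a frame for `ℝ^N`, `N ≥ 2`. If there is an
orthogonal transformation `T` of `ℝ^N` with `T(φ_k) ∈ ℝ^{N-2} × (0,∞)²` for every `k` (the last
two coordinates of each `T(φ_k)` are strictly positive), then `Φ` is not scalable. In
particular, `Φ` is not scalable if there are `i ≠ j` with `φ_k(i)·φ_k(j) > 0` for all `k`. -/
theorem statement11 {M N : ℕ} (hN : 2 ≤ N) (Φ : Fin M → Fin N → ℝ) :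
    ((∃ T : Matrix (Fin N) (Fin N) ℝ, T.transpose * T = 1 ∧ ∀ k : Fin M,
        0 < (T.mulVec (Φ k)) ⟨N - 2, by omega⟩ ∧ 0 < (T.mulVec (Φ k)) ⟨N - 1, by omega⟩) →
      ¬ IsScalable Φ) ∧
    ((∃ i j : Fin N, i ≠ j ∧ ∀ k : Fin M, 0 < Φ k i * Φ k j) → ¬ IsScalable Φ) := by
  refine ⟨?_, fun ⟨i, j, hij, hpos⟩ => not_isScalable_of_mul_pos hij hpos⟩
  rintro ⟨T, hT, hTpos⟩ hΦ
  have hlast : (⟨N - 2, by omega⟩ : Fin N) ≠ ⟨N - 1, by omega⟩ := by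
    rw [Ne, Fin.mk.injEq]
    omega
  exact not_isScalable_of_mul_pos hlast (fun k => mul_pos (hTpos k).1 (hTpos k).2)
    (hΦ.orthogonal_mulVec hT)

end ScalableFrames
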